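/- arXiv:2303.13890 — 7 statements merged into one kernel-verified Lean document; each statement's English description precedes it below -/
import Mathlib

section
/- Let φ be a Bernstein function extended to the right half-plane. Then for any a > 0 and b ∈ ℝ: |Im(φ(a(1+ib)))| ≤ |b|·a·φ'(a) ≤ |b|·φ(a). -/
open MeasureTheory Set Filter

lemma aux_integrable {E : Type*} [NormedAddCommGroup E]
    (μ : Measure ℝ)
    (hμ : Integrable (fun y => min y 1) (μ.restrict (Ioi 0)))
    (f : ℝ → E) (hm : AEStronglyMeasurable f (μ.restrict (Ioi 0)))
    (C : ℝ) (hC : ∀ y ∈ Ioi (0:ℝ), ‖f y‖ ≤ C * min y 1) :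
    Integrable f (μ.restrict (Ioi 0)) := by
  refine (hμ.const_mul C).mono' hm ?_
  filter_upwards [ae_restrict_mem measurableSet_Ioi] with y hy
  exact hC y hy

lemma aux_texp (t : ℝ) (ht : 0 ≤ t) : t * Real.exp (-t) ≤ 1 - Real.exp (-t) := by
  have h1 := Real.add_one_le_exp t
  have h2 := Real.exp_pos (-t)
  have h3 : Real.exp t * Real.exp (-t) = 1 := by rw [← Real.exp_add]; simp
  nlinarith

lemma aux_one_sub (t : ℝ) (ht : 0 ≤ t) : 1 - Real.exp (-t) ≤ min t 1 := by
  have h1 := Real.add_one_le_exp (-t)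
  have h2 := Real.exp_pos (-t)
  exact le_min (by linarith) (by linarith)

theorem bernstein_im_bound
    (q 𝔟 : ℝ) (hq : 0 ≤ q) (h𝔟 : 0 ≤ 𝔟)
    (μ : Measure ℝ)
    (hμ : Integrable (fun y => min y 1) (μ.restrict (Ioi 0)))
    (hne : q + 𝔟 + (μ (Ioi 0)).toReal ≠ 0)
    (φC : ℂ → ℂ) (φ φ' : ℝ → ℝ)
    (hφC : ∀ z : ℂ, 0 < z.re →
      φC z = (q : ℂ) + (𝔟 : ℂ) * z + ∫ y in Ioi (0:ℝ), (1 - Complex.exp (-(z * (y : ℂ)))) ∂μ)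
    (hφ : ∀ x > 0, φ x = q + 𝔟 * x + ∫ y in Ioi (0:ℝ), (1 - Real.exp (-(x * y))) ∂μ)
    (hφ' : ∀ x > 0, φ' x = 𝔟 + ∫ y in Ioi (0:ℝ), y * Real.exp (-(x * y)) ∂μ) :
    ∀ a : ℝ, 0 < a → ∀ b : ℝ,
      |(φC ((a : ℂ) * (1 + Complex.I * (b : ℂ)))).im| ≤ |b| * a * φ' a ∧
      |b| * a * φ' a ≤ |b| * φ a := by
  intro a ha b
  set z : ℂ := (a : ℂ) * (1 + Complex.I * (b : ℂ)) with hz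
  have hzre : z.re = a := by simp [hz]
  have hzim : z.im = a * b := by simp [hz]
  -- min inequality
  have hminmax : ∀ c y : ℝ, 0 ≤ c → 0 ≤ y → min (c * y) 1 ≤ max 1 c * min y 1 := by
    intro c y hc hy
    rcases le_total y 1 with h | h
    · rw [min_eq_left h]
      calc min (c*y) 1 ≤ c*y := min_le_left _ _
        _ ≤ max 1 c * y := mul_le_mul_of_nonneg_right (le_max_right 1 c) hy
    · rw [min_eq_right h, mul_one]
      exact (min_le_right _ _).trans (le_max_left 1 c)
  -- integrability of y * exp(-(a*y))
  have hint2 : Integrable (fun y => y * Real.exp (-(a * y))) (μ.restrict (Ioi 0)) := by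
    refine aux_integrable μ hμ _ (Continuous.aestronglyMeasurable (by fun_prop))
      (a⁻¹ * max 1 a) ?_
    intro y hy
    have hy : (0:ℝ) < y := hy
    have key : a * y * Real.exp (-(a*y)) ≤ min (a*y) 1 := by
      have h1 := aux_texp (a*y) (by positivity)
      exact h1.trans (aux_one_sub (a*y) (by positivity))
    have hmin := hminmax a y ha.le hy.le
    have hnorm : ‖y * Real.exp (-(a*y))‖ = y * Real.exp (-(a*y)) := by
      rw [Real.norm_eq_abs, abs_of_nonneg]; positivity
    rw [hnorm, mul_assoc]
    have heq : y * Real.exp (-(a*y)) = a⁻¹ * (a * y * Real.exp (-(a*y))) := by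
      field_simp
    rw [heq]
    exact mul_le_mul_of_nonneg_left (key.trans hmin) (by positivity)
  -- integrability of 1 - exp(-(a*y))
  have hint1 : Integrable (fun y => 1 - Real.exp (-(a * y))) (μ.restrict (Ioi 0)) := by
    refine aux_integrable μ hμ _ (Continuous.aestronglyMeasurable (by fun_prop))
      (max 1 a) ?_
    intro y hy
    have hy : (0:ℝ) < y := hy
    have h2 := Real.exp_pos (-(a*y))
    have h3 : Real.exp (-(a*y)) ≤ 1 := Real.exp_le_one_iff.mpr (by nlinarith)
    have hnorm : ‖1 - Real.exp (-(a*y))‖ = 1 - Real.exp (-(a*y)) := by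
      rw [Real.norm_eq_abs, abs_of_nonneg]; linarith
    rw [hnorm]
    exact (aux_one_sub (a*y) (by positivity)).trans (hminmax a y ha.le hy.le)
  -- integrability of the complex integrand
  have hint3 : Integrable (fun y : ℝ => 1 - Complex.exp (-(z * (y : ℂ)))) (μ.restrict (Ioi 0)) := by
    refine aux_integrable μ hμ _ (Continuous.aestronglyMeasurable (by fun_prop))
      (2 * max ‖z‖ 1) ?_
    intro y hy
    have hy : (0:ℝ) < y := hy
    have habs : ‖(-(z * (y:ℂ)))‖ = ‖z‖ * y := by
      rw [norm_neg, norm_mul, Complex.norm_real, Real.norm_eq_abs, abs_of_nonneg hy.le]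
    have hz0 : 0 ≤ ‖z‖ := norm_nonneg z
    rcases le_total (‖z‖ * y) 1 with h | h
    · have hb := Complex.norm_exp_sub_one_le (x := -(z * (y:ℂ))) (by rw [habs]; exact h)
      rw [habs] at hb
      have : ‖1 - Complex.exp (-(z * (y:ℂ)))‖ = ‖(Complex.exp (-(z * (y:ℂ))) - 1)‖ := by
        rw [norm_sub_rev]
      rw [this]
      refine hb.trans ?_
      rcases le_total y 1 with h' | h'
      · rw [min_eq_left h']
        have : ‖z‖ ≤ max ‖z‖ 1 := le_max_left _ _
        nlinarith
      · rw [min_eq_right h']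
        have h1 : 1 ≤ max ‖z‖ 1 := le_max_right _ _
        nlinarith
    · have hb : ‖1 - Complex.exp (-(z * (y:ℂ)))‖ ≤ 2 := by
        calc ‖1 - Complex.exp (-(z * (y:ℂ)))‖
            ≤ ‖(1:ℂ)‖ + ‖Complex.exp (-(z * (y:ℂ)))‖ := norm_sub_le _ _
          _ ≤ 1 + 1 := by
              have : ‖Complex.exp (-(z * (y:ℂ)))‖ = Real.exp ((-(z * (y:ℂ))).re) := by
                rw [Complex.norm_exp]
              rw [this, norm_one]
              have hre : (-(z * (y:ℂ))).re = -(a * y) := by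
                simp [Complex.mul_re, hzre, hzim]
              rw [hre]
              have := Real.exp_le_one_iff.mpr (by nlinarith : -(a*y) ≤ 0)
              linarith
          _ = 2 := by norm_num
      refine hb.trans ?_
      rcases le_total y 1 with h' | h'
      · rw [min_eq_left h']
        have : ‖z‖ ≤ max ‖z‖ 1 := le_max_left _ _
        nlinarith
      · rw [min_eq_right h']
        have h1 : 1 ≤ max ‖z‖ 1 := le_max_right _ _
        nlinarith
  -- imaginary part of the integrand
  have him : ∀ y : ℝ, (1 - Complex.exp (-(z * (y : ℂ)))).im
      = Real.exp (-(a*y)) * Real.sin (a*b*y) := by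
    intro y
    have hre : (-(z * (y:ℂ))).re = -(a * y) := by simp [Complex.mul_re, hzre, hzim]
    have him' : (-(z * (y:ℂ))).im = -(a * b * y) := by simp [Complex.mul_im, hzre, hzim]
    rw [Complex.sub_im, Complex.one_im, Complex.exp_im, hre, him', Real.sin_neg]
    ring
  have hint_im : Integrable (fun y => Real.exp (-(a*y)) * Real.sin (a*b*y))
      (μ.restrict (Ioi 0)) := by
    have h := hint3.im
    simpa only [RCLike.im_to_complex, him] using h
  -- compute the imaginary part of φC z
  have hφCz : (φC z).im = 𝔟 * (a*b) + ∫ y in Ioi (0:ℝ), Real.exp (-(a*y)) * Real.sin (a*b*y) ∂μ := by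
    rw [hφC z (by rw [hzre]; exact ha)]
    rw [Complex.add_im, Complex.add_im, Complex.ofReal_im, Complex.mul_im]
    have hI := integral_im (𝕜 := ℂ) hint3
    simp only [RCLike.im_to_complex] at hI
    rw [← hI]
    simp only [him, Complex.ofReal_re, Complex.ofReal_im, hzre, hzim]
    ring
  constructor
  · -- first inequality
    rw [hφCz, hφ' a ha]
    have hI : |∫ y in Ioi (0:ℝ), Real.exp (-(a*y)) * Real.sin (a*b*y) ∂μ|
        ≤ |b| * a * ∫ y in Ioi (0:ℝ), y * Real.exp (-(a*y)) ∂μ := by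
      calc |∫ y in Ioi (0:ℝ), Real.exp (-(a*y)) * Real.sin (a*b*y) ∂μ|
          ≤ ∫ y in Ioi (0:ℝ), ‖Real.exp (-(a*y)) * Real.sin (a*b*y)‖ ∂μ := by
            rw [← Real.norm_eq_abs]; exact norm_integral_le_integral_norm _
        _ ≤ ∫ y in Ioi (0:ℝ), (|b| * a) * (y * Real.exp (-(a*y))) ∂μ := by
            refine integral_mono_ae hint_im.norm (hint2.const_mul _) ?_
            filter_upwards [ae_restrict_mem measurableSet_Ioi] with y hy
            have hy : (0:ℝ) < y := hy
            have hs : |Real.sin (a*b*y)| ≤ |a*b*y| := Real.abs_sin_le_abs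
            have he := Real.exp_pos (-(a*y))
            have : ‖Real.exp (-(a*y)) * Real.sin (a*b*y)‖
                = Real.exp (-(a*y)) * |Real.sin (a*b*y)| := by
              rw [Real.norm_eq_abs, abs_mul, abs_of_pos he]
            rw [this]
            have haby : |a*b*y| = |b| * a * y := by
              rw [abs_mul, abs_mul, abs_of_pos ha, abs_of_pos hy]; ring
            calc Real.exp (-(a*y)) * |Real.sin (a*b*y)|
                ≤ Real.exp (-(a*y)) * (|b| * a * y) := by
                  refine mul_le_mul_of_nonneg_left ?_ he.le
                  rw [← haby]; exact hs
              _ = (|b| * a) * (y * Real.exp (-(a*y))) := by ring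
        _ = |b| * a * ∫ y in Ioi (0:ℝ), y * Real.exp (-(a*y)) ∂μ := by
            rw [integral_const_mul]
    have hb' : |𝔟 * (a*b)| = 𝔟 * a * |b| := by
      rw [abs_mul, abs_mul, abs_of_nonneg h𝔟, abs_of_pos ha]; ring
    calc |𝔟 * (a*b) + ∫ y in Ioi (0:ℝ), Real.exp (-(a*y)) * Real.sin (a*b*y) ∂μ|
        ≤ |𝔟 * (a*b)| + |∫ y in Ioi (0:ℝ), Real.exp (-(a*y)) * Real.sin (a*b*y) ∂μ| :=
          abs_add_le _ _
      _ ≤ 𝔟 * a * |b| + |b| * a * ∫ y in Ioi (0:ℝ), y * Real.exp (-(a*y)) ∂μ := by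
          rw [hb']; linarith
      _ = |b| * a * (𝔟 + ∫ y in Ioi (0:ℝ), y * Real.exp (-(a*y)) ∂μ) := by ring
  · -- second inequality
    have key : a * φ' a ≤ φ a := by
      rw [hφ' a ha, hφ a ha]
      have h1 : a * ∫ y in Ioi (0:ℝ), y * Real.exp (-(a*y)) ∂μ
          ≤ ∫ y in Ioi (0:ℝ), (1 - Real.exp (-(a*y))) ∂μ := by
        rw [← integral_const_mul]
        refine integral_mono_ae (hint2.const_mul a) hint1 ?_
        filter_upwards [ae_restrict_mem measurableSet_Ioi] with y hy
        have hy : (0:ℝ) < y := hy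
        have := aux_texp (a*y) (by positivity)
        calc a * (y * Real.exp (-(a*y))) = (a*y) * Real.exp (-(a*y)) := by ring
          _ ≤ 1 - Real.exp (-(a*y)) := this
      linarith
    calc |b| * a * φ' a = |b| * (a * φ' a) := by ring
      _ ≤ |b| * φ a := mul_le_mul_of_nonneg_left key (abs_nonneg b)
end

section
/- Let φ be a Bernstein function extended to the right half-plane. Then for any a > 0 and b ∈ ℝ: Re(φ(a(1+ib))) - φ(a) ≤ (b²a²/2)·(-φ''(a)) ≤ b²·φ(a). -/
open MeasureTheory Set Filter

private lemma aux_exp_quad {t : ℝ} (ht : 0 ≤ t) :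
    t ^ 2 / 2 * Real.exp (-t) ≤ 1 - Real.exp (-t) := by
  have hE := Real.quadratic_le_exp_of_nonneg ht
  have h1 : Real.exp (-t) * Real.exp t = 1 := by
    rw [← Real.exp_add]; simp
  have h2 : (0:ℝ) < Real.exp (-t) := Real.exp_pos _
  nlinarith [mul_le_mul_of_nonneg_left hE h2.le, mul_nonneg ht h2.le]

private lemma aux_cos (s : ℝ) : 1 - Real.cos s ≤ s ^ 2 / 2 := by
  have := Real.one_sub_sq_div_two_le_cos (x := s)
  linarith

theorem bernstein_re_increment_bound
    (q 𝔟 : ℝ) (hq : 0 ≤ q) (h𝔟 : 0 ≤ 𝔟)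
    (μ : Measure ℝ)
    (hμ : Integrable (fun y => min y 1) (μ.restrict (Ioi 0)))
    (hne : q + 𝔟 + (μ (Ioi 0)).toReal ≠ 0)
    (φC : ℂ → ℂ) (φ φ'' : ℝ → ℝ)
    (hφC : ∀ z : ℂ, 0 < z.re →
      φC z = (q : ℂ) + (𝔟 : ℂ) * z + ∫ y in Ioi (0:ℝ), (1 - Complex.exp (-(z * (y : ℂ)))) ∂μ)
    (hφ : ∀ x > 0, φ x = q + 𝔟 * x + ∫ y in Ioi (0:ℝ), (1 - Real.exp (-(x * y))) ∂μ)
    (hφ'' : ∀ x > 0, φ'' x = -∫ y in Ioi (0:ℝ), y ^ 2 * Real.exp (-(x * y)) ∂μ) :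
    ∀ a : ℝ, 0 < a → ∀ b : ℝ,
      (φC ((a : ℂ) * (1 + Complex.I * (b : ℂ)))).re - φ a ≤ b ^ 2 * a ^ 2 / 2 * (-φ'' a) ∧
      b ^ 2 * a ^ 2 / 2 * (-φ'' a) ≤ b ^ 2 * φ a := by
  intro a ha b
  set z : ℂ := (a : ℂ) * (1 + Complex.I * (b : ℂ)) with hz
  have hzre : z.re = a := by simp [hz]
  have hzim : z.im = a * b := by simp [hz]
  set k : ℝ := a * b with hk
  have hmem : ∀ᵐ y ∂(μ.restrict (Ioi 0)), y ∈ Ioi (0:ℝ) := ae_restrict_mem measurableSet_Ioi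
  -- integrability of 1 - e^{-ay}
  have h1 : Integrable (fun y => 1 - Real.exp (-(a * y))) (μ.restrict (Ioi 0)) := by
    refine Integrable.mono' (hμ.const_mul (max a 1)) ?_ ?_
    · exact (continuous_const.sub (Real.continuous_exp.comp
        (continuous_const.mul continuous_id).neg)).aestronglyMeasurable
    · filter_upwards [hmem] with y hy
      have hy0 : (0:ℝ) < y := hy
      have hay : 0 ≤ a * y := by positivity
      have hle1 : Real.exp (-(a * y)) ≤ 1 := Real.exp_le_one_iff.mpr (by linarith)
      have hlin : 1 - Real.exp (-(a * y)) ≤ a * y := by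
        have := Real.add_one_le_exp (-(a * y)); linarith
      rw [Real.norm_eq_abs, abs_of_nonneg (by linarith)]
      rcases le_total y 1 with h | h
      · rw [min_eq_left h]
        calc 1 - Real.exp (-(a * y)) ≤ a * y := hlin
          _ ≤ max a 1 * y := by
            apply mul_le_mul_of_nonneg_right (le_max_left a 1) hy0.le
      · rw [min_eq_right h]
        calc 1 - Real.exp (-(a * y)) ≤ 1 := by linarith [(Real.exp_pos (-(a * y))).le]
          _ ≤ max a 1 * 1 := by simpa using le_max_right a 1
  -- integrability of y^2 e^{-ay}
  have h2 : Integrable (fun y => y ^ 2 * Real.exp (-(a * y))) (μ.restrict (Ioi 0)) := by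
    refine Integrable.mono' (h1.const_mul (2 / a ^ 2)) ?_ ?_
    · exact ((continuous_pow 2).mul (Real.continuous_exp.comp
        (continuous_const.mul continuous_id).neg)).aestronglyMeasurable
    · filter_upwards [hmem] with y hy
      have hy0 : (0:ℝ) < y := hy
      have hay : 0 ≤ a * y := by positivity
      have key := aux_exp_quad hay
      have hE : (0:ℝ) < Real.exp (-(a * y)) := Real.exp_pos _
      rw [Real.norm_eq_abs, abs_of_nonneg (by positivity)]
      rw [div_mul_eq_mul_div, le_div_iff₀ (by positivity)]
      nlinarith [key, sq_nonneg (a * y)]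
  -- integrability of complex integrand
  have habs_z : (0:ℝ) < ‖z‖ := by
    rw [norm_pos_iff]
    intro h
    rw [h] at hzre
    simp at hzre
    linarith
  have hC : Integrable (fun y : ℝ => 1 - Complex.exp (-(z * (y : ℂ)))) (μ.restrict (Ioi 0)) := by
    refine Integrable.mono' (hμ.const_mul (2 * max (‖z‖) 1)) ?_ ?_
    · exact (continuous_const.sub (Complex.continuous_exp.comp
        ((continuous_const.mul Complex.continuous_ofReal).neg))).aestronglyMeasurable
    · filter_upwards [hmem] with y hy
      have hy0 : (0:ℝ) < y := hy
      have habs : ‖z * (y : ℂ)‖ = ‖z‖ * y := by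
        rw [norm_mul, Complex.norm_real, Real.norm_eq_abs, abs_of_nonneg hy0.le]
      have hre : (-(z * (y : ℂ))).re = -(a * y) := by
        simp [Complex.mul_re, hzre, hzim]
      have hb2 : ‖1 - Complex.exp (-(z * (y : ℂ)))‖ ≤ 2 := by
        calc ‖1 - Complex.exp (-(z * (y : ℂ)))‖
            ≤ ‖(1:ℂ)‖ + ‖Complex.exp (-(z * (y : ℂ)))‖ :=
              (norm_sub_le _ _)
          _ ≤ 1 + 1 := by
              rw [norm_one, Complex.norm_exp, hre]
              have : Real.exp (-(a * y)) ≤ 1 :=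
                Real.exp_le_one_iff.mpr (by nlinarith)
              linarith
          _ = 2 := by norm_num
      show ‖1 - Complex.exp (-(z * (y : ℂ)))‖ ≤ 2 * max (‖z‖) 1 * min y 1
      rcases le_or_gt (‖z * (y : ℂ)‖) 1 with hcase | hcase
      · have hsmall : ‖1 - Complex.exp (-(z * (y : ℂ)))‖ ≤ 2 * (‖z‖ * y) := by
          rw [norm_sub_rev]
          have := Complex.norm_exp_sub_one_le (x := -(z * (y : ℂ))) (by rwa [norm_neg])
          rwa [norm_neg, habs] at this
        rcases le_total y 1 with h | h
        · rw [min_eq_left h]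
          calc ‖1 - Complex.exp (-(z * (y : ℂ)))‖ ≤ 2 * (‖z‖ * y) := hsmall
            _ ≤ 2 * max (‖z‖) 1 * y := by
                rw [mul_assoc]
                have := mul_le_mul_of_nonneg_right (le_max_left (‖z‖) 1) hy0.le
                nlinarith
        · rw [min_eq_right h]
          calc ‖1 - Complex.exp (-(z * (y : ℂ)))‖ ≤ 2 := hb2
            _ ≤ 2 * max (‖z‖) 1 * 1 := by
                have := le_max_right (‖z‖) 1
                nlinarith
      · rw [habs] at hcase
        rcases le_total y 1 with h | h
        · rw [min_eq_left h]
          calc ‖1 - Complex.exp (-(z * (y : ℂ)))‖ ≤ 2 := hb2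
            _ ≤ 2 * (‖z‖ * y) := by nlinarith
            _ ≤ 2 * max (‖z‖) 1 * y := by
                have := mul_le_mul_of_nonneg_right (le_max_left (‖z‖) 1) hy0.le
                nlinarith
        · rw [min_eq_right h]
          calc ‖1 - Complex.exp (-(z * (y : ℂ)))‖ ≤ 2 := hb2
            _ ≤ 2 * max (‖z‖) 1 * 1 := by
                have := le_max_right (‖z‖) 1
                nlinarith
  -- real part of the complex integrand
  have hre_eq : ∀ y : ℝ, (1 - Complex.exp (-(z * (y : ℂ)))).re
      = 1 - Real.exp (-(a * y)) * Real.cos (k * y) := by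
    intro y
    have hre : (-(z * (y : ℂ))).re = -(a * y) := by
      simp [Complex.mul_re, hzre, hzim]
    have him : (-(z * (y : ℂ))).im = -(k * y) := by
      simp [Complex.mul_im, hzre, hzim, hk]
    rw [Complex.sub_re, Complex.one_re, Complex.exp_re, hre, him, Real.cos_neg]
  have hReInt : Integrable (fun y => 1 - Real.exp (-(a * y)) * Real.cos (k * y))
      (μ.restrict (Ioi 0)) := by
    refine hC.re.congr (Eventually.of_forall fun y => ?_)
    simp only [RCLike.re_to_complex, hre_eq]
  -- compute the real part of φC z
  have hzre_pos : 0 < z.re := by rw [hzre]; exact ha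
  have hφCval : (φC z).re = q + 𝔟 * a
      + ∫ y in Ioi (0:ℝ), (1 - Real.exp (-(a * y)) * Real.cos (k * y)) ∂μ := by
    have hIre := integral_re (𝕜 := ℂ) hC
    simp only [RCLike.re_to_complex, hre_eq] at hIre
    rw [hφC z hzre_pos]
    rw [Complex.add_re, Complex.add_re, Complex.ofReal_re, Complex.mul_re,
      Complex.ofReal_re, Complex.ofReal_im, hzre, hzim, ← hIre]
    ring
  have hφval : φ a = q + 𝔟 * a + ∫ y in Ioi (0:ℝ), (1 - Real.exp (-(a * y))) ∂μ := hφ a ha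
  have hφ''val : -φ'' a = ∫ y in Ioi (0:ℝ), y ^ 2 * Real.exp (-(a * y)) ∂μ := by
    rw [hφ'' a ha]; ring
  -- first inequality
  have hdiff : (φC z).re - φ a
      = ∫ y in Ioi (0:ℝ), (Real.exp (-(a * y)) * (1 - Real.cos (k * y))) ∂μ := by
    rw [hφCval, hφval]
    have : ∫ y in Ioi (0:ℝ), (Real.exp (-(a * y)) * (1 - Real.cos (k * y))) ∂μ
        = ∫ y in Ioi (0:ℝ), ((1 - Real.exp (-(a * y)) * Real.cos (k * y))
            - (1 - Real.exp (-(a * y)))) ∂μ := by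
      congr 1; ext y; ring
    rw [this, integral_sub hReInt h1]
    ring
  have hmono1 : ∫ y in Ioi (0:ℝ), (Real.exp (-(a * y)) * (1 - Real.cos (k * y))) ∂μ
      ≤ ∫ y in Ioi (0:ℝ), (k ^ 2 / 2 * (y ^ 2 * Real.exp (-(a * y)))) ∂μ := by
    refine integral_mono (hReInt.sub h1 |>.congr ?_) (h2.const_mul _) ?_
    · filter_upwards with y
      simp only [Pi.sub_apply]
      ring
    · intro y
      have hE : (0:ℝ) < Real.exp (-(a * y)) := Real.exp_pos _
      have := aux_cos (k * y)
      nlinarith [mul_le_mul_of_nonneg_left this hE.le]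
  have hconst1 : ∫ y in Ioi (0:ℝ), (k ^ 2 / 2 * (y ^ 2 * Real.exp (-(a * y)))) ∂μ
      = b ^ 2 * a ^ 2 / 2 * (-φ'' a) := by
    rw [integral_const_mul, hφ''val, hk]
    ring
  constructor
  · rw [hdiff, ← hconst1]
    exact hmono1
  -- second inequality
  · have hmono2 : a ^ 2 / 2 * ∫ y in Ioi (0:ℝ), (y ^ 2 * Real.exp (-(a * y))) ∂μ
        ≤ ∫ y in Ioi (0:ℝ), (1 - Real.exp (-(a * y))) ∂μ := by
      rw [← integral_const_mul]
      refine integral_mono_ae (h2.const_mul _) h1 ?_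
      filter_upwards [hmem] with y hy
      have hy0 : (0:ℝ) < y := hy
      have hay : 0 ≤ a * y := by positivity
      have := aux_exp_quad hay
      nlinarith [Real.exp_pos (-(a * y))]
    have hint1_le : ∫ y in Ioi (0:ℝ), (1 - Real.exp (-(a * y))) ∂μ ≤ φ a := by
      rw [hφval]
      nlinarith [mul_nonneg h𝔟 ha.le]
    have hb2 : (0:ℝ) ≤ b ^ 2 := sq_nonneg b
    calc b ^ 2 * a ^ 2 / 2 * (-φ'' a)
        = b ^ 2 * (a ^ 2 / 2 * ∫ y in Ioi (0:ℝ), (y ^ 2 * Real.exp (-(a * y))) ∂μ) := by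
          rw [hφ''val]; ring
      _ ≤ b ^ 2 * ∫ y in Ioi (0:ℝ), (1 - Real.exp (-(a * y))) ∂μ :=
          mul_le_mul_of_nonneg_left hmono2 hb2
      _ ≤ b ^ 2 * φ a := mul_le_mul_of_nonneg_left hint1_le hb2
end

section
/- Let φ be a Bernstein function with -φ''(x) > 0 for all x > 0. If liminf_{x→∞} φ''(2x)/φ''(x) > 0, then limsup_{x→∞} x·φ'''(x)/(-φ''(x)) < ∞. -/
open MeasureTheory Set Filter

private lemma helper1 (t : ℝ) : t * Real.exp (-t) ≤ 1 := by
  rw [Real.exp_neg, ← div_eq_mul_inv, div_le_one (Real.exp_pos t)]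
  linarith [Real.add_one_le_exp t]

private lemma helper2 (t : ℝ) (ht : 0 ≤ t) : t ^ 2 * Real.exp (-t) ≤ 4 := by
  have h := helper1 (t / 2)
  have h0 : 0 ≤ t / 2 * Real.exp (-(t / 2)) := by positivity
  have hsplit : Real.exp (-t) = Real.exp (-(t / 2)) * Real.exp (-(t / 2)) := by
    rw [← Real.exp_add]; ring_nf
  rw [hsplit]
  nlinarith [mul_le_mul h h h0 zero_le_one]

private lemma int2 (μ : Measure ℝ)
    (hμ : Integrable (fun y => min y 1) (μ.restrict (Ioi 0)))
    (a : ℝ) (ha : 0 < a) :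
    Integrable (fun y => y ^ 2 * Real.exp (-(a * y))) (μ.restrict (Ioi 0)) := by
  apply (hμ.const_mul (max 1 (4 / a ^ 2))).mono
  · exact (Continuous.mul (by fun_prop) (by fun_prop)).aestronglyMeasurable
  · rw [ae_restrict_iff' measurableSet_Ioi]
    refine ae_of_all _ (fun y hy => ?_)
    simp only [mem_Ioi] at hy
    have hC1 : (1:ℝ) ≤ max 1 (4 / a ^ 2) := le_max_left _ _
    have hmin : 0 < min y 1 := lt_min hy one_pos
    have hE : 0 < Real.exp (-(a * y)) := Real.exp_pos _
    rw [Real.norm_eq_abs, Real.norm_eq_abs, abs_of_nonneg (by positivity),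
      abs_of_nonneg (by positivity)]
    rcases le_or_gt y 1 with h1 | h1
    · have hE1 : Real.exp (-(a * y)) ≤ 1 := Real.exp_le_one_iff.mpr (by nlinarith)
      have : min y 1 = y := min_eq_left h1
      rw [this]
      nlinarith
    · have : min y 1 = 1 := min_eq_right h1.le
      rw [this, mul_one]
      have h4 : y ^ 2 * Real.exp (-(a * y)) ≤ 4 / a ^ 2 := by
        rw [le_div_iff₀ (by positivity)]
        nlinarith [helper2 (a * y) (by positivity)]
      exact h4.trans (le_max_right _ _)

private lemma main_ineq (μ : Measure ℝ)
    (hμ : Integrable (fun y => min y 1) (μ.restrict (Ioi 0)))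
    (x : ℝ) (hx : 0 < x) :
    x * (∫ y in Ioi (0:ℝ), y ^ 3 * Real.exp (-(x * y)) ∂μ)
      ≤ 2 * (∫ y in Ioi (0:ℝ), y ^ 2 * Real.exp (-(x / 2 * y)) ∂μ) := by
  rw [← integral_const_mul, ← integral_const_mul]
  apply integral_mono_of_nonneg
  · refine (ae_restrict_iff' measurableSet_Ioi).mpr (ae_of_all _ fun y hy => ?_)
    simp only [mem_Ioi] at hy
    positivity
  · exact (int2 μ hμ (x / 2) (by linarith)).const_mul 2
  · refine (ae_restrict_iff' measurableSet_Ioi).mpr (ae_of_all _ fun y hy => ?_)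
    simp only [mem_Ioi] at hy
    have hE : Real.exp (-(x / 2 * y)) = Real.exp (-(x * y / 2)) := by ring_nf
    have hsplit : Real.exp (-(x * y)) = Real.exp (-(x * y / 2)) * Real.exp (-(x * y / 2)) := by
      rw [← Real.exp_add]; ring_nf
    have h1 : (x * y / 2) * Real.exp (-(x * y / 2)) ≤ 1 := helper1 _
    have hEp : 0 < Real.exp (-(x * y / 2)) := Real.exp_pos _
    simp only [hE, hsplit]
    nlinarith [mul_le_mul_of_nonneg_left h1
      (by positivity : (0:ℝ) ≤ y ^ 2 * Real.exp (-(x * y / 2)))]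

theorem bernstein_limsup_third_deriv
    (q 𝔟 : ℝ) (hq : 0 ≤ q) (h𝔟 : 0 ≤ 𝔟)
    (μ : Measure ℝ)
    (hμ : Integrable (fun y => min y 1) (μ.restrict (Ioi 0)))
    (φ'' φ''' : ℝ → ℝ)
    (hφ'' : ∀ x > 0, φ'' x = -∫ y in Ioi (0:ℝ), y ^ 2 * Real.exp (-(x * y)) ∂μ)
    (hφ''' : ∀ x > 0, φ''' x = ∫ y in Ioi (0:ℝ), y ^ 3 * Real.exp (-(x * y)) ∂μ)
    (hneg : ∀ x > 0, φ'' x < 0)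
    (hliminf : 0 < Filter.liminf (fun x : ℝ => ((φ'' (2 * x) / φ'' x : ℝ) : EReal)) Filter.atTop) :
    Filter.limsup (fun x : ℝ => ((x * φ''' x / (-φ'' x) : ℝ) : EReal)) Filter.atTop < ⊤ := by
  -- extract a real c with 0 < c < liminf
  obtain ⟨c, hc0, hclim⟩ := EReal.lt_iff_exists_real_btwn.mp hliminf
  have hc0' : (0:ℝ) < c := by exact_mod_cast hc0
  have hev : ∀ᶠ u : ℝ in atTop, (c : EReal) < ((φ'' (2 * u) / φ'' u : ℝ) : EReal) :=
    Filter.eventually_lt_of_lt_liminf hclim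
  obtain ⟨R, hR⟩ := eventually_atTop.mp hev
  have hbound : ∀ᶠ x : ℝ in atTop,
      ((x * φ''' x / (-φ'' x) : ℝ) : EReal) ≤ ((2 / c : ℝ) : EReal) := by
    filter_upwards [eventually_ge_atTop (max (2 * R) 1)] with x hxR
    have hx1 : (1:ℝ) ≤ x := le_trans (le_max_right _ _) hxR
    have hx : (0:ℝ) < x := by linarith
    have hx2 : (0:ℝ) < x / 2 := by linarith
    have hxh : R ≤ x / 2 := by
      have := le_trans (le_max_left (2 * R) 1) hxR; linarith
    have hratio := hR (x / 2) hxh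
    rw [EReal.coe_lt_coe_iff] at hratio
    have h2x : 2 * (x / 2) = x := by ring
    rw [h2x] at hratio
    have hA : (0:ℝ) < -φ'' x := by linarith [hneg x hx]
    have hB : (0:ℝ) < -φ'' (x / 2) := by linarith [hneg (x / 2) hx2]
    -- numerator bound
    have hnum : x * φ''' x ≤ 2 * (-φ'' (x / 2)) := by
      rw [hφ''' x hx, hφ'' (x / 2) hx2, neg_neg]
      exact main_ineq μ hμ x hx
    have hr2 : c < (-φ'' x) / (-φ'' (x / 2)) := by rwa [neg_div_neg_eq]
    have h3 : c * (-φ'' (x / 2)) < -φ'' x := (lt_div_iff₀ hB).mp hr2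
    have hfinal : x * φ''' x / (-φ'' x) ≤ 2 / c := by
      rw [div_le_div_iff₀ hA hc0']
      nlinarith [mul_le_mul_of_nonneg_right hnum hc0'.le]
    exact EReal.coe_le_coe_iff.mpr hfinal
  exact lt_of_le_of_lt (Filter.limsup_le_of_le (by isBoundedDefault) hbound)
    (EReal.coe_lt_top _)
end

section
/- Let φ be a Bernstein function with Lévy measure μ and Δ(x) = ∫₀^{1/x} y² μ(dy) satisfying liminf_{x→∞} x²Δ(x)/ln(x) = L ∈ (0,∞]. Then φ is unbounded: lim_{x→∞} φ(x) = ∞. -/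
open MeasureTheory Set Filter

lemma exp_aux (t : ℝ) (h0 : 0 ≤ t) (h1 : t ≤ 1) : t ^ 2 / 2 ≤ 1 - Real.exp (-t) := by
  have h2 : (1 + t) * Real.exp (-t) ≤ 1 := by
    have := Real.add_one_le_exp t
    have hp := Real.exp_pos (-t)
    have : (1 + t) * Real.exp (-t) ≤ Real.exp t * Real.exp (-t) := by nlinarith
    rwa [← Real.exp_add, add_neg_cancel, Real.exp_zero] at this
  have hp := Real.exp_pos (-t)
  nlinarith

theorem bernstein_unbounded_of_liminf
    (q 𝔟 : ℝ) (hq : 0 ≤ q) (h𝔟 : 0 ≤ 𝔟)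
    (μ : Measure ℝ)
    (hμ : Integrable (fun y => min y 1) (μ.restrict (Ioi 0)))
    (φ Δ : ℝ → ℝ)
    (hφ : ∀ x > 0, φ x = q + 𝔟 * x + ∫ y in Ioi (0:ℝ), (1 - Real.exp (-(x * y))) ∂μ)
    (hint : ∀ x > 0, Integrable (fun y => 1 - Real.exp (-(x * y))) (μ.restrict (Ioi 0)))
    (hΔ : ∀ x > 0, Δ x = ∫ y in Ioc (0:ℝ) (1 / x), y ^ 2 ∂μ)
    (hΔint : ∀ x > 0, IntegrableOn (fun y => y ^ 2) (Ioc (0:ℝ) (1 / x)) μ)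
    (L : EReal) (hLpos : 0 < L)
    (hL : Filter.liminf (fun x : ℝ => ((x ^ 2 * Δ x / Real.log x : ℝ) : EReal)) Filter.atTop = L) :
    Filter.Tendsto φ Filter.atTop Filter.atTop := by
  -- pick real ε with 0 < ε < L
  obtain ⟨z, hz0, hzL⟩ := exists_between hLpos
  lift z to ℝ using ⟨(hzL.trans_le le_top).ne, (lt_of_le_of_lt bot_le hz0).ne'⟩ with ε
  have hε : (0:ℝ) < ε := by exact_mod_cast hz0
  -- eventually x² Δ x / log x > ε
  have hev : ∀ᶠ x : ℝ in atTop, ε < x ^ 2 * Δ x / Real.log x := by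
    have := Filter.eventually_lt_of_lt_liminf (hL ▸ hzL)
    filter_upwards [this] with x hx
    exact_mod_cast hx
  -- key lower bound: φ x ≥ x²/2 * Δ x for x > 0
  have key : ∀ x : ℝ, 0 < x → x ^ 2 / 2 * Δ x ≤ φ x := by
    intro x hx
    have hsub : Ioc (0:ℝ) (1 / x) ⊆ Ioi 0 := Ioc_subset_Ioi_self
    have hintIoc : IntegrableOn (fun y => 1 - Real.exp (-(x * y))) (Ioc (0:ℝ) (1/x)) μ :=
      MeasureTheory.IntegrableOn.mono_set (hint x hx) hsub
    have hnn : ∀ y ∈ Ioi (0:ℝ), 0 ≤ 1 - Real.exp (-(x * y)) := by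
      intro y hy
      have : Real.exp (-(x * y)) ≤ 1 := by
        rw [Real.exp_le_one_iff]
        nlinarith [hy.out]
      linarith
    have h1 : ∫ y in Ioc (0:ℝ) (1/x), (1 - Real.exp (-(x * y))) ∂μ
        ≤ ∫ y in Ioi (0:ℝ), (1 - Real.exp (-(x * y))) ∂μ := by
      apply setIntegral_mono_set (hint x hx)
      · exact (ae_restrict_iff' measurableSet_Ioi).2 (Filter.Eventually.of_forall hnn)
      · exact HasSubset.Subset.eventuallyLE hsub
    have h2 : ∫ y in Ioc (0:ℝ) (1/x), (x ^ 2 / 2 * y ^ 2) ∂μ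
        ≤ ∫ y in Ioc (0:ℝ) (1/x), (1 - Real.exp (-(x * y))) ∂μ := by
      apply setIntegral_mono_on ((hΔint x hx).const_mul _) hintIoc measurableSet_Ioc
      intro y hy
      have hy0 : 0 < y := hy.1
      have hxy1 : x * y ≤ 1 := by
        rw [← le_div_iff₀' hx] at *
        exact hy.2
      have := exp_aux (x * y) (by positivity) hxy1
      calc x ^ 2 / 2 * y ^ 2 = (x * y) ^ 2 / 2 := by ring
        _ ≤ 1 - Real.exp (-(x * y)) := this
    have h3 : ∫ y in Ioc (0:ℝ) (1/x), (x ^ 2 / 2 * y ^ 2) ∂μ = x ^ 2 / 2 * Δ x := by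
      rw [hΔ x hx, MeasureTheory.integral_const_mul]
    rw [hφ x hx]
    have h4 : 0 ≤ q + 𝔟 * x := by positivity
    linarith [h3 ▸ (h2.trans h1)]
  -- comparison function tends to atTop
  have hlog : Tendsto (fun x : ℝ => ε / 2 * Real.log x) atTop atTop :=
    Real.tendsto_log_atTop.const_mul_atTop (by positivity)
  apply tendsto_atTop_mono' atTop _ hlog
  filter_upwards [hev, eventually_ge_atTop (Real.exp 1), eventually_gt_atTop (0:ℝ)] with x hx1 hx2 hx3
  have hlog1 : (1:ℝ) ≤ Real.log x := by
    rw [← Real.log_exp 1]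
    exact Real.log_le_log (Real.exp_pos 1) hx2
  have hlogpos : 0 < Real.log x := by linarith
  have : ε * Real.log x < x ^ 2 * Δ x := by
    rwa [lt_div_iff₀ hlogpos] at hx1
  have hk := key x hx3
  nlinarith
end

section
/- Let φ be a nonzero Bernstein function extended to the right half-plane. Then for any c > 0 and u ∈ ℝ: |φ'(c+iu)| ≤ |φ(c+iu)|/c, i.e. |φ'(c+iu)/φ(c+iu)| ≤ 1/c whenever φ(c+iu) ≠ 0. -/
open MeasureTheory Set Filter

theorem bernstein_log_deriv_bound
    (q 𝔟 : ℝ) (hq : 0 ≤ q) (h𝔟 : 0 ≤ 𝔟)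
    (μ : Measure ℝ)
    (hμ : Integrable (fun y => min y 1) (μ.restrict (Ioi 0)))
    (φC φ'C : ℂ → ℂ)
    (hφC : ∀ z : ℂ, 0 < z.re →
      φC z = (q : ℂ) + (𝔟 : ℂ) * z + ∫ y in Ioi (0:ℝ), (1 - Complex.exp (-(z * (y : ℂ)))) ∂μ)
    (hφ'C : ∀ z : ℂ, 0 < z.re →
      φ'C z = (𝔟 : ℂ) + ∫ y in Ioi (0:ℝ), (y : ℂ) * Complex.exp (-(z * (y : ℂ))) ∂μ) :
    ∀ c : ℝ, 0 < c → ∀ u : ℝ,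
      ‖φ'C ((c : ℂ) + (u : ℂ) * Complex.I)‖ ≤
        ‖φC ((c : ℂ) + (u : ℂ) * Complex.I)‖ / c ∧
      (φC ((c : ℂ) + (u : ℂ) * Complex.I) ≠ 0 →
        ‖φ'C ((c : ℂ) + (u : ℂ) * Complex.I) /
          φC ((c : ℂ) + (u : ℂ) * Complex.I)‖ ≤ 1 / c) := by
  intro c hc u
  set z : ℂ := (c : ℂ) + (u : ℂ) * Complex.I with hzdef
  have hzre : z.re = c := by simp [hzdef]
  have hzim : z.im = u := by simp [hzdef]
  have hcz : (0:ℝ) < z.re := by rw [hzre]; exact hc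
  have hzyre : ∀ y : ℝ, (-(z * (y:ℂ))).re = -(c * y) := by
    intro y; simp [hzre, hzim]
  -- norm computations
  have habs_exp : ∀ y : ℝ, ‖Complex.exp (-(z * (y:ℂ)))‖ = Real.exp (-(c*y)) := by
    intro y; rw [Complex.norm_exp, hzyre]
  -- key integrabilities
  have hg1 : Integrable (fun y => y * Real.exp (-(c*y))) (μ.restrict (Ioi 0)) := by
    refine (hμ.const_mul (1 + 1/c)).mono' ?_ ?_
    · exact (Continuous.mul continuous_id ((Real.continuous_exp).comp (by continuity))).aestronglyMeasurable
    · rw [ae_restrict_iff' measurableSet_Ioi]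
      refine ae_of_all _ (fun y hy => ?_)
      have hy0 : 0 < y := hy
      have hexp1 : Real.exp (-(c*y)) ≤ 1 := by
        apply Real.exp_le_one_iff.2; nlinarith
      have hnn : 0 ≤ y * Real.exp (-(c*y)) := le_of_lt (by positivity)
      rw [Real.norm_eq_abs, abs_of_nonneg hnn]
      have hcinv : 0 < 1/c := by positivity
      rcases le_total y 1 with h | h
      · rw [min_eq_left h]
        nlinarith [mul_nonneg (le_of_lt hy0) (sub_nonneg.2 hexp1), mul_pos hy0 hcinv]
      · rw [min_eq_right h]
        have hcy : c * y + 1 ≤ Real.exp (c*y) := Real.add_one_le_exp _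
        have hecy : Real.exp (-(c*y)) = (Real.exp (c*y))⁻¹ := by
          rw [Real.exp_neg]
        have hpos : (0:ℝ) < Real.exp (c*y) := Real.exp_pos _
        have : y * Real.exp (-(c*y)) ≤ 1/c := by
          rw [hecy, le_div_iff₀ hc, mul_comm, ← mul_assoc]
          rw [mul_inv_le_iff₀ hpos]
          nlinarith
        nlinarith
  have hmeas_cexp : AEStronglyMeasurable (fun y : ℝ => (y:ℂ) * Complex.exp (-(z * (y:ℂ)))) (μ.restrict (Ioi 0)) := by
    exact (Complex.continuous_ofReal.mul (Complex.continuous_exp.comp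
      ((continuous_const.mul Complex.continuous_ofReal).neg))).aestronglyMeasurable
  have hnorm_eq : ∀ y ∈ Ioi (0:ℝ), ‖(y:ℂ) * Complex.exp (-(z * (y:ℂ)))‖ = y * Real.exp (-(c*y)) := by
    intro y hy
    rw [norm_mul, habs_exp, Complex.norm_of_nonneg (le_of_lt hy)]
  have hf1 : Integrable (fun y : ℝ => (y:ℂ) * Complex.exp (-(z * (y:ℂ)))) (μ.restrict (Ioi 0)) := by
    refine hg1.mono' hmeas_cexp ?_
    rw [ae_restrict_iff' measurableSet_Ioi]
    exact ae_of_all _ (fun y hy => le_of_eq (hnorm_eq y hy))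
  have hg2 : Integrable (fun y => 1 - Real.exp (-(c*y))) (μ.restrict (Ioi 0)) := by
    refine (hμ.const_mul (c + 1)).mono' ?_ ?_
    · exact (Continuous.sub continuous_const ((Real.continuous_exp).comp (by continuity))).aestronglyMeasurable
    · rw [ae_restrict_iff' measurableSet_Ioi]
      refine ae_of_all _ (fun y hy => ?_)
      have hy0 : 0 < y := hy
      have hexp1 : Real.exp (-(c*y)) ≤ 1 := by
        apply Real.exp_le_one_iff.2; nlinarith
      have hle : 1 - Real.exp (-(c*y)) ≤ c * y := by
        have := Real.add_one_le_exp (-(c*y))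
        nlinarith
      rw [Real.norm_eq_abs, abs_of_nonneg (by nlinarith [Real.exp_pos (-(c*y))])]
      rcases le_total y 1 with h | h
      · rw [min_eq_left h]; nlinarith
      · rw [min_eq_right h]; nlinarith [Real.exp_pos (-(c*y))]
  have hf2 : Integrable (fun y : ℝ => 1 - Complex.exp (-(z * (y:ℂ)))) (μ.restrict (Ioi 0)) := by
    refine (hμ.const_mul (2 * ‖z‖ + 2)).mono' ?_ ?_
    · exact (continuous_const.sub (Complex.continuous_exp.comp
        ((continuous_const.mul Complex.continuous_ofReal).neg))).aestronglyMeasurable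
    · rw [ae_restrict_iff' measurableSet_Ioi]
      refine ae_of_all _ (fun y hy => ?_)
      have hy0 : 0 < y := hy
      have hb2 : ‖1 - Complex.exp (-(z * (y:ℂ)))‖ ≤ 2 := by
        calc ‖1 - Complex.exp (-(z * (y:ℂ)))‖ ≤ ‖(1:ℂ)‖ + ‖Complex.exp (-(z * (y:ℂ)))‖ :=
              norm_sub_le _ _
          _ ≤ 1 + 1 := by
              rw [norm_one, habs_exp]
              have : Real.exp (-(c*y)) ≤ 1 := by apply Real.exp_le_one_iff.2; nlinarith
              linarith
          _ = 2 := by norm_num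
      have hbz : ‖1 - Complex.exp (-(z * (y:ℂ)))‖ ≤ 2 * ‖z‖ * y := by
        rcases le_total (‖-(z * (y:ℂ))‖) 1 with h | h
        · have := Complex.norm_exp_sub_one_le h
          rw [norm_sub_rev] at this  -- |1 - e| = |e - 1|
          calc ‖1 - Complex.exp (-(z * (y:ℂ)))‖
              = ‖Complex.exp (-(z * (y:ℂ))) - 1‖ := by
                rw [norm_sub_rev]
            _ ≤ 2 * ‖-(z * (y:ℂ))‖ := Complex.norm_exp_sub_one_le h
            _ = 2 * ‖z‖ * y := by
                rw [norm_neg, norm_mul, Complex.norm_of_nonneg (le_of_lt hy0), mul_assoc]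
        · have h1 : (1:ℝ) ≤ ‖z‖ * y := by
            have : ‖-(z * (y:ℂ))‖ = ‖z‖ * y := by
              rw [norm_neg, norm_mul, Complex.norm_of_nonneg (le_of_lt hy0)]
            linarith [this ▸ h]
          calc ‖1 - Complex.exp (-(z * (y:ℂ)))‖ ≤ 2 := hb2
            _ ≤ 2 * (‖z‖ * y) := by nlinarith
            _ = 2 * ‖z‖ * y := by ring
      rcases le_total y 1 with h | h
      · rw [min_eq_left h]
        calc ‖1 - Complex.exp (-(z * (y:ℂ)))‖ ≤ 2 * ‖z‖ * y := hbz
          _ ≤ (2 * ‖z‖ + 2) * y := by nlinarith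
      · rw [min_eq_right h]
        calc ‖1 - Complex.exp (-(z * (y:ℂ)))‖ ≤ 2 := hb2
          _ ≤ (2 * ‖z‖ + 2) * 1 := by
              have := norm_nonneg z; nlinarith
  -- Step (a): |φ'C z| ≤ 𝔟 + ∫ y e^{-cy}
  set A : ℝ := ∫ y in Ioi (0:ℝ), y * Real.exp (-(c*y)) ∂μ with hA
  set B : ℝ := ∫ y in Ioi (0:ℝ), (1 - Real.exp (-(c*y))) ∂μ with hB
  have hAnn : 0 ≤ A := by
    apply setIntegral_nonneg measurableSet_Ioi
    intro y hy
    have : 0 < y := hy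
    positivity
  have stepA : ‖φ'C z‖ ≤ 𝔟 + A := by
    rw [hφ'C z hcz]
    calc ‖(𝔟:ℂ) + ∫ y in Ioi (0:ℝ), (y:ℂ) * Complex.exp (-(z * (y:ℂ))) ∂μ‖
        ≤ ‖(𝔟:ℂ)‖ + ‖∫ y in Ioi (0:ℝ), (y:ℂ) * Complex.exp (-(z * (y:ℂ))) ∂μ‖ :=
          norm_add_le _ _
      _ ≤ 𝔟 + A := by
          gcongr
          · rw [Complex.norm_of_nonneg h𝔟]
          · calc ‖∫ y in Ioi (0:ℝ), (y:ℂ) * Complex.exp (-(z * (y:ℂ))) ∂μ‖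
                ≤ ∫ y in Ioi (0:ℝ), ‖(y:ℂ) * Complex.exp (-(z * (y:ℂ)))‖ ∂μ :=
                  by exact norm_integral_le_integral_norm _
              _ = A := by
                  rw [hA]
                  apply setIntegral_congr_fun measurableSet_Ioi
                  intro y hy
                  exact hnorm_eq y hy
  -- Step (b): c * A ≤ B
  have stepB : c * A ≤ B := by
    rw [hA, hB, ← integral_const_mul]
    apply setIntegral_mono_on (hg1.const_mul c) hg2 measurableSet_Ioi
    intro y hy
    have hy0 : 0 < y := hy
    have h1 : c * y + 1 ≤ Real.exp (c * y) := Real.add_one_le_exp _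
    have h2 : Real.exp (-(c*y)) * Real.exp (c*y) = 1 := by
      rw [← Real.exp_add]; norm_num
    have hep : 0 < Real.exp (-(c*y)) := Real.exp_pos _
    nlinarith
  -- Step (c): q + 𝔟*c + B ≤ (φC z).re
  have stepC : q + 𝔟 * c + B ≤ (φC z).re := by
    rw [hφC z hcz]
    have hre : ((q:ℂ) + (𝔟:ℂ) * z + ∫ y in Ioi (0:ℝ), (1 - Complex.exp (-(z * (y:ℂ)))) ∂μ).re
        = q + 𝔟 * c + (∫ y in Ioi (0:ℝ), (1 - Complex.exp (-(z * (y:ℂ)))) ∂μ).re := by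
      simp [hzre]
    rw [hre]
    have hreint : (∫ y in Ioi (0:ℝ), (1 - Complex.exp (-(z * (y:ℂ)))) ∂μ).re
        = ∫ y in Ioi (0:ℝ), (1 - Complex.exp (-(z * (y:ℂ)))).re ∂μ :=
      (integral_re hf2).symm
    rw [hreint]
    have hmono : B ≤ ∫ y in Ioi (0:ℝ), (1 - Complex.exp (-(z * (y:ℂ)))).re ∂μ := by
      rw [hB]
      apply setIntegral_mono_on hg2 hf2.re measurableSet_Ioi
      intro y hy
      have hy0 : 0 < y := hy
      simp only [RCLike.re_to_complex]
      have hre2 : (1 - Complex.exp (-(z * (y:ℂ)))).re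
          = 1 - Real.exp (-(c*y)) * Real.cos ((-(z * (y:ℂ))).im) := by
        simp [Complex.exp_re, hzyre]
      rw [hre2]
      have hcos : Real.cos ((-(z * (y:ℂ))).im) ≤ 1 := Real.cos_le_one _
      have hep : 0 < Real.exp (-(c*y)) := Real.exp_pos _
      nlinarith
    linarith
  -- Step (d)
  have stepD : (φC z).re ≤ ‖φC z‖ := Complex.re_le_norm _
  have main : ‖φ'C z‖ ≤ ‖φC z‖ / c := by
    rw [le_div_iff₀ hc]
    calc ‖φ'C z‖ * c ≤ (𝔟 + A) * c := by
          apply mul_le_mul_of_nonneg_right stepA (le_of_lt hc)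
      _ = 𝔟 * c + c * A := by ring
      _ ≤ q + 𝔟 * c + B := by linarith
      _ ≤ (φC z).re := stepC
      _ ≤ ‖φC z‖ := stepD
  refine ⟨main, fun hne => ?_⟩
  have hpos : 0 < ‖φC z‖ := norm_pos_iff.mpr hne
  rw [norm_div, div_le_div_iff₀ hpos hc]
  calc ‖φ'C z‖ * c ≤ ‖φC z‖ / c * c := by
        apply mul_le_mul_of_nonneg_right main (le_of_lt hc)
    _ = ‖φC z‖ := by field_simp
    _ = 1 * ‖φC z‖ := by ring
end

section
/- Let φ be a Bernstein function with drift 𝔟 and Lévy measure μ satisfying liminf_{x→∞} x²Δ(x)/ln(x) = L > 0, where Δ(x) = ∫₀^{1/x} y² μ(dy). Suppose φ'(0+) may be infinite and let t: (0,∞) → (0,∞) satisfy 𝔟 < t(x)/x < φ'(0+) and t(x)/x → 𝔟 as x → ∞. Define a_*(x) = (φ')^{-1}(t(x)/x). Then a_*(x) → ∞ as x → ∞, and for every fixed M ∈ (0,L), a_*(x) > M e^{-1}/(t(x)/x - 𝔟) for all sufficiently large x. -/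
open MeasureTheory Set Filter

lemma aux_int1 (μ : Measure ℝ)
    (hμ : Integrable (fun y => min y 1) (μ.restrict (Ioi 0)))
    (z : ℝ) (hz : 0 < z) :
    Integrable (fun y => y * Real.exp (-(z * y))) (μ.restrict (Ioi 0)) := by
  apply Integrable.mono' (hμ.const_mul (max 1 (1 / z)))
  · exact (continuous_id.mul (Real.continuous_exp.comp (continuous_const.mul continuous_id).neg)).aestronglyMeasurable
  · rw [ae_restrict_iff' measurableSet_Ioi]
    filter_upwards with y hy
    have hy0 : 0 < y := hy
    have hexp : 0 < Real.exp (-(z * y)) := Real.exp_pos _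
    have hexp1 : Real.exp (-(z * y)) ≤ 1 := Real.exp_le_one_iff.mpr (by nlinarith)
    rw [Real.norm_eq_abs, abs_of_nonneg (by positivity)]
    rcases le_or_gt y 1 with h1 | h1
    · rw [min_eq_left h1]
      have : (1:ℝ) ≤ max 1 (1/z) := le_max_left _ _
      nlinarith
    · rw [min_eq_right h1.le]
      have hle : z * y ≤ Real.exp (z * y) := by
        have := Real.add_one_le_exp (z * y); linarith
      have hinv : Real.exp (-(z*y)) = (Real.exp (z*y))⁻¹ := by
        rw [Real.exp_neg]
      have hep : 0 < Real.exp (z*y) := Real.exp_pos _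
      have h2 : z * y * Real.exp (-(z*y)) ≤ 1 := by
        rw [hinv]
        rw [mul_inv_le_iff₀ hep, one_mul]
        exact hle
      have h3 : y * Real.exp (-(z*y)) ≤ 1 / z := by
        rw [le_div_iff₀ hz]; nlinarith
      calc y * Real.exp (-(z*y)) ≤ 1/z := h3
        _ ≤ max 1 (1/z) * 1 := by rw [mul_one]; exact le_max_right _ _

lemma aux_int3 (μ : Measure ℝ)
    (hμ : Integrable (fun y => min y 1) (μ.restrict (Ioi 0)))
    (z : ℝ) (hz : 0 < z) :
    IntegrableOn (fun y => y ^ 2) (Ioc (0:ℝ) (1 / z)) μ := by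
  have h0 : IntegrableOn (fun y => min y 1) (Ioc (0:ℝ) (1/z)) μ :=
    IntegrableOn.mono_set (s := Ioc (0:ℝ) (1/z)) hμ Ioc_subset_Ioi_self
  apply Integrable.mono' (h0.const_mul ((1/z) * max 1 (1/z)))
  · exact (continuous_pow 2).aestronglyMeasurable
  · rw [ae_restrict_iff' measurableSet_Ioc]
    filter_upwards with y hy
    obtain ⟨hy0, hy1⟩ := hy
    have hzinv : 0 < 1/z := by positivity
    rw [Real.norm_eq_abs, abs_of_nonneg (by positivity)]
    rcases le_or_gt y 1 with h1 | h1
    · rw [min_eq_left h1]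
      have hm : (1:ℝ) ≤ max 1 (1/z) := le_max_left _ _
      nlinarith [mul_le_mul_of_nonneg_right hy1 hy0.le,
        mul_le_mul_of_nonneg_right hm (by positivity : (0:ℝ) ≤ (1/z) * y)]
    · rw [min_eq_right h1.le]
      have hm : (1/z) ≤ max 1 (1/z) := le_max_right _ _
      nlinarith [mul_le_mul_of_nonneg_right hy1 hy0.le,
        mul_le_mul_of_nonneg_right hy1 hzinv.le]

theorem saddle_point_astar_behaviour
    (q 𝔟 : ℝ) (hq : 0 ≤ q) (h𝔟 : 0 ≤ 𝔟)
    (μ : Measure ℝ)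
    (hμ : Integrable (fun y => min y 1) (μ.restrict (Ioi 0)))
    (hμne : μ (Ioi 0) ≠ 0)
    (φ' Δ : ℝ → ℝ)
    (hφ' : ∀ x > 0, φ' x = 𝔟 + ∫ y in Ioi (0:ℝ), y * Real.exp (-(x * y)) ∂μ)
    (hΔ : ∀ x > 0, Δ x = ∫ y in Ioc (0:ℝ) (1 / x), y ^ 2 ∂μ)
    (hstrict : StrictAntiOn φ' (Ioi 0))
    (L : EReal) (hLpos : 0 < L)
    (hL : Filter.liminf (fun x : ℝ => ((x ^ 2 * Δ x / Real.log x : ℝ) : EReal)) Filter.atTop = L)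
    (t a : ℝ → ℝ)
    (ht : ∀ x > 0, 𝔟 < t x / x)
    (ha : ∀ x > 0, 0 < a x ∧ φ' (a x) = t x / x)
    (htend : Filter.Tendsto (fun x => t x / x) Filter.atTop (nhds 𝔟)) :
    Filter.Tendsto a Filter.atTop Filter.atTop ∧
      ∀ M : ℝ, 0 < M → (M : EReal) < L →
        ∀ᶠ x in Filter.atTop, M * Real.exp (-1) / (t x / x - 𝔟) < a x := by
  -- φ' > 𝔟 on (0, ∞)
  have hφpos : ∀ z > 0, 𝔟 < φ' z := by
    intro z hz
    have h1 : 𝔟 ≤ φ' (z + 1) := by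
      rw [hφ' (z+1) (by linarith)]
      have h0 : 0 ≤ ∫ y in Ioi (0:ℝ), y * Real.exp (-((z+1) * y)) ∂μ := by
        apply setIntegral_nonneg measurableSet_Ioi
        intro y hy
        have : (0:ℝ) < y := hy
        positivity
      linarith
    have h2 : φ' (z + 1) < φ' z :=
      hstrict (mem_Ioi.mpr hz) (mem_Ioi.mpr (by linarith)) (lt_add_one z)
    linarith
  -- Part 1 : a → ∞
  have part1 : Filter.Tendsto a Filter.atTop Filter.atTop := by
    rw [tendsto_atTop]
    intro K
    set K' := max K 1 with hK'
    have hK'pos : (0:ℝ) < K' := lt_of_lt_of_le one_pos (le_max_right _ _)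
    have hb : 𝔟 < φ' K' := hφpos K' hK'pos
    have hev : ∀ᶠ x in atTop, t x / x < φ' K' := htend.eventually_lt_const hb
    filter_upwards [hev, eventually_gt_atTop (0:ℝ)] with x hx hx0
    obtain ⟨hax, haeq⟩ := ha x hx0
    have : K' < a x := by
      by_contra hcon
      push_neg at hcon
      rcases hcon.lt_or_eq with h | h
      · have := hstrict (mem_Ioi.mpr hax) (mem_Ioi.mpr hK'pos) h
        rw [haeq] at this; linarith
      · rw [← h, haeq] at hx; linarith
    calc K ≤ K' := le_max_left _ _
      _ ≤ a x := this.le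
  refine ⟨part1, ?_⟩
  -- key inequality: e⁻¹ z Δ(z) ≤ φ'(z) - 𝔟
  have key : ∀ z > 0, Real.exp (-1) * (z * Δ z) ≤ φ' z - 𝔟 := by
    intro z hz
    rw [hφ' z hz, hΔ z hz]
    have hi1 := aux_int1 μ hμ z hz
    have hi2 : IntegrableOn (fun y => y * Real.exp (-(z*y))) (Ioc (0:ℝ) (1/z)) μ :=
      IntegrableOn.mono_set (s := Ioc (0:ℝ) (1/z)) hi1 Ioc_subset_Ioi_self
    have hi3 := aux_int3 μ hμ z hz
    have step1 : Real.exp (-1) * (z * ∫ y in Ioc (0:ℝ) (1/z), y ^ 2 ∂μ)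
        = ∫ y in Ioc (0:ℝ) (1/z), (Real.exp (-1) * z) * y ^ 2 ∂μ := by
      rw [integral_const_mul]
      ring
    have step2 : (∫ y in Ioc (0:ℝ) (1/z), (Real.exp (-1) * z) * y ^ 2 ∂μ)
        ≤ ∫ y in Ioc (0:ℝ) (1/z), y * Real.exp (-(z*y)) ∂μ := by
      apply setIntegral_mono_on (hi3.const_mul _) hi2 measurableSet_Ioc
      intro y hy
      obtain ⟨hy0, hy1⟩ := hy
      have hzy : z * y ≤ 1 := by
        rw [← le_div_iff₀' hz]; exact hy1
      have hmono : Real.exp (-1) ≤ Real.exp (-(z*y)) :=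
        Real.exp_le_exp.mpr (by linarith)
      have hexp : 0 < Real.exp (-(z*y)) := Real.exp_pos _
      nlinarith [mul_le_mul_of_nonneg_right hmono (by positivity : (0:ℝ) ≤ z * y ^ 2),
        mul_le_mul_of_nonneg_right hzy (by positivity : (0:ℝ) ≤ y * Real.exp (-(z*y)))]
    have step3 : (∫ y in Ioc (0:ℝ) (1/z), y * Real.exp (-(z*y)) ∂μ)
        ≤ ∫ y in Ioi (0:ℝ), y * Real.exp (-(z*y)) ∂μ := by
      apply setIntegral_mono_set hi1
      · rw [EventuallyLE, ae_restrict_iff' measurableSet_Ioi]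
        filter_upwards with y hy
        have : (0:ℝ) < y := hy
        positivity
      · exact HasSubset.Subset.eventuallyLE Ioc_subset_Ioi_self
    have := (step1 ▸ step2).trans step3
    linarith
  intro M hM hML
  rw [← hL] at hML
  have hev1 : ∀ᶠ z : ℝ in atTop, (M : EReal) < ((z ^ 2 * Δ z / Real.log z : ℝ) : EReal) :=
    eventually_lt_of_lt_liminf hML
  have key2 : ∀ᶠ z : ℝ in atTop, M * Real.exp (-1) < z * (φ' z - 𝔟) := by
    filter_upwards [hev1, eventually_ge_atTop (Real.exp 1)] with z h1 h2
    have hz : 0 < z := lt_of_lt_of_le (Real.exp_pos 1) h2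
    have hlog : 1 ≤ Real.log z := by
      rw [← Real.log_exp 1]
      exact Real.log_le_log (Real.exp_pos 1) h2
    have h1' : M < z ^ 2 * Δ z / Real.log z := EReal.coe_lt_coe_iff.mp h1
    have h3 : M * Real.log z < z ^ 2 * Δ z := (lt_div_iff₀ (by linarith)).mp h1'
    have h4 := key z hz
    have hexp : 0 < Real.exp (-1:ℝ) := Real.exp_pos _
    nlinarith [mul_le_mul_of_nonneg_left h4 hz.le,
      mul_lt_mul_of_pos_left h3 hexp,
      mul_le_mul_of_nonneg_left hlog (by positivity : (0:ℝ) ≤ Real.exp (-1) * M)]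
  have hev2 := part1.eventually key2
  filter_upwards [hev2, eventually_gt_atTop (0:ℝ)] with x hx hx0
  obtain ⟨hax, haeq⟩ := ha x hx0
  have htx : 0 < t x / x - 𝔟 := sub_pos.mpr (ht x hx0)
  rw [div_lt_iff₀ htx]
  rw [haeq] at hx
  linarith [hx]
end

section
/- Let φ be a Bernstein function with representation φ(z) = q + 𝔟 z + ∫₀^∞ (1 - e^{-zy}) μ(dy) extended to the closed right half-plane. Then lim_{|b|→∞} |φ(a+ib)|/|a+ib| = 𝔟 for every fixed a ≥ 0; equivalently |φ(z)| = 𝔟|z|(1+o(1)) as |z| → ∞ along vertical lines in {Re z ≥ 0}. -/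
open MeasureTheory Set Filter

lemma aux_one_sub_exp_bound (w : ℂ) (hw : 0 ≤ w.re) :
    ‖1 - Complex.exp (-w)‖ ≤ ‖w‖ := by
  rcases eq_or_ne w 0 with rfl | hw0
  · simp
  have h1 : ∫ t in (0:ℝ)..1, Complex.exp ((-w) * t) =
      (Complex.exp ((-w) * 1) - Complex.exp ((-w) * 0)) / (-w) :=
    integral_exp_mul_complex (neg_ne_zero.mpr hw0)
  have h2 : (1 : ℂ) - Complex.exp (-w) = w * ∫ t in (0:ℝ)..1, Complex.exp ((-w) * t) := by
    rw [h1]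
    rw [show Complex.exp (-w * 1) - Complex.exp (-w * 0) = Complex.exp (-w) - 1 by simp]
    rw [← mul_div_assoc, mul_comm w, mul_div_assoc, div_neg, div_self hw0]
    ring
  rw [h2, norm_mul]
  have h3 : ‖∫ t in (0:ℝ)..1, Complex.exp ((-w) * t)‖ ≤ 1 * |(1:ℝ) - 0| := by
    apply intervalIntegral.norm_integral_le_of_norm_le_const
    intro t ht
    rw [Set.uIoc_of_le (by norm_num)] at ht
    rw [Complex.norm_exp]
    have he : ((-w) * (t : ℂ)).re = -(w.re * t) := by simp [Complex.mul_re]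
    rw [he]
    have h4 : 0 ≤ w.re * t := mul_nonneg hw (le_of_lt ht.1)
    have h5 : Real.exp (-(w.re * t)) ≤ 1 := Real.exp_le_one_iff.mpr (by linarith)
    simpa using h5
  calc ‖w‖ * ‖∫ t in (0:ℝ)..1, Complex.exp ((-w) * t)‖
      ≤ ‖w‖ * 1 := by
        refine mul_le_mul_of_nonneg_left ?_ (norm_nonneg _)
        simpa using h3
    _ = ‖w‖ := mul_one _

lemma aux_one_sub_exp_bound2 (w : ℂ) (hw : 0 ≤ w.re) :
    ‖1 - Complex.exp (-w)‖ ≤ 2 := by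
  calc ‖1 - Complex.exp (-w)‖
      ≤ ‖(1:ℂ)‖ + ‖Complex.exp (-w)‖ := norm_sub_le _ _
    _ ≤ 1 + 1 := by
        gcongr
        · simp
        · rw [Complex.norm_exp]
          exact Real.exp_le_one_iff.mpr (by simpa using hw)
    _ = 2 := by norm_num

theorem bernstein_abs_asymptotic_vertical
    (q 𝔟 : ℝ) (hq : 0 ≤ q) (h𝔟 : 0 ≤ 𝔟)
    (μ : Measure ℝ)
    (hμ : Integrable (fun y => min y 1) (μ.restrict (Ioi 0)))
    (φC : ℂ → ℂ)
    (hφC : ∀ z : ℂ, 0 ≤ z.re →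
      φC z = (q : ℂ) + (𝔟 : ℂ) * z + ∫ y in Ioi (0:ℝ), (1 - Complex.exp (-(z * (y : ℂ)))) ∂μ)
    (hint : ∀ z : ℂ, 0 ≤ z.re →
      Integrable (fun y : ℝ => 1 - Complex.exp (-(z * (y : ℂ)))) (μ.restrict (Ioi 0))) :
    ∀ a : ℝ, 0 ≤ a →
      Filter.Tendsto
        (fun b : ℝ =>
          ‖φC ((a : ℂ) + (b : ℂ) * Complex.I)‖ /
            ‖(a : ℂ) + (b : ℂ) * Complex.I‖)
        (Filter.cocompact ℝ) (nhds 𝔟) := by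
  intro a ha
  set Z : ℝ → ℂ := fun b => (a : ℂ) + (b : ℂ) * Complex.I with hZdef
  have hre : ∀ b, (Z b).re = a := by intro b; simp [Z]
  have him : ∀ b, (Z b).im = b := by intro b; simp [Z]
  have hwre : ∀ b (y : ℝ), 0 ≤ y → 0 ≤ (Z b * (y : ℂ)).re := by
    intro b y hy
    have : (Z b * (y : ℂ)).re = a * y := by
      simp [Complex.mul_re, hre, him]
    rw [this]
    exact mul_nonneg ha hy
  have habsw : ∀ b (y : ℝ), 0 ≤ y →
      ‖Z b * (y : ℂ)‖ = ‖Z b‖ * y := by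
    intro b y hy
    rw [norm_mul, Complex.norm_of_nonneg hy]
  have habs : Tendsto (fun b => ‖Z b‖) (cocompact ℝ) atTop := by
    apply tendsto_atTop_mono (fun b => ?_) tendsto_norm_cocompact_atTop
    calc ‖b‖ = |(Z b).im| := by rw [him, Real.norm_eq_abs]
      _ ≤ ‖Z b‖ := Complex.abs_im_le_norm _
  have hev1 : ∀ᶠ b in cocompact ℝ, 1 ≤ ‖Z b‖ := habs.eventually_ge_atTop 1
  have hZne : ∀ᶠ b in cocompact ℝ, Z b ≠ 0 := by
    filter_upwards [hev1] with b hb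
    intro h
    rw [h] at hb
    norm_num at hb
  -- integral term divided by Z b tends to 0
  have hker : Tendsto
      (fun b => ∫ y in Ioi (0:ℝ), (1 - Complex.exp (-(Z b * (y : ℂ)))) / (Z b) ∂μ)
      (cocompact ℝ) (nhds 0) := by
    haveI : (cocompact ℝ).IsCountablyGenerated := by
      rw [cocompact_eq_atBot_atTop]; infer_instance
    have h0 : (0 : ℂ) = ∫ _y in Ioi (0:ℝ), (0 : ℂ) ∂μ := by simp
    rw [h0]
    apply tendsto_integral_filter_of_dominated_convergence (fun y => 2 * min y 1)
    · filter_upwards with b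
      have := (hint (Z b) (by rw [hre]; exact ha)).aestronglyMeasurable.mul_const (Z b)⁻¹
      simpa [div_eq_mul_inv] using this
    · filter_upwards [hev1] with b hb
      refine (ae_restrict_iff' measurableSet_Ioi).mpr (ae_of_all _ fun y hy => ?_)
      have hy0 : (0:ℝ) < y := hy
      rw [norm_div,
        div_le_iff₀ (by linarith)]
      rcases le_or_gt y 1 with hy1 | hy1
      · have h1 := aux_one_sub_exp_bound (Z b * (y : ℂ)) (hwre b y hy0.le)
        rw [habsw b y hy0.le] at h1
        calc ‖1 - Complex.exp (-(Z b * (y : ℂ)))‖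
            ≤ ‖Z b‖ * y := h1
          _ ≤ 2 * min y 1 * ‖Z b‖ := by
              rw [min_eq_left hy1]; nlinarith [norm_nonneg (Z b)]
      · calc ‖1 - Complex.exp (-(Z b * (y : ℂ)))‖ ≤ 2 :=
            aux_one_sub_exp_bound2 _ (hwre b y hy0.le)
          _ = 2 * min y 1 * 1 := by rw [min_eq_right hy1.le]; ring
          _ ≤ 2 * min y 1 * ‖Z b‖ := by gcongr
    · exact hμ.const_mul 2
    · refine (ae_restrict_iff' measurableSet_Ioi).mpr (ae_of_all _ fun y hy => ?_)
      have hbound : ∀ᶠ b in cocompact ℝ,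
          ‖(1 - Complex.exp (-(Z b * (y : ℂ)))) / (Z b)‖ ≤ 2 / ‖Z b‖ := by
        filter_upwards [hev1] with b hb
        rw [norm_div]
        gcongr
        all_goals first
          | exact aux_one_sub_exp_bound2 _ (hwre b y (le_of_lt hy))
          | linarith
      exact squeeze_zero_norm' hbound (tendsto_const_nhds.div_atTop habs)
  -- main convergence of φC (Z b) / Z b
  have hmain : Tendsto (fun b => φC (Z b) / Z b) (cocompact ℝ) (nhds (𝔟 : ℂ)) := by
    have hq0 : Tendsto (fun b => (q : ℂ) / Z b) (cocompact ℝ) (nhds 0) := by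
      have h1 : Tendsto (fun b => (q : ℝ) / ‖Z b‖) (cocompact ℝ) (nhds 0) :=
        tendsto_const_nhds.div_atTop habs
      apply squeeze_zero_norm (fun b => ?_) h1
      rw [norm_div, Complex.norm_of_nonneg hq]
    have hsum : Tendsto (fun b => (q : ℂ) / Z b + (𝔟 : ℂ) +
        ∫ y in Ioi (0:ℝ), (1 - Complex.exp (-(Z b * (y : ℂ)))) / (Z b) ∂μ)
        (cocompact ℝ) (nhds ((0 : ℂ) + (𝔟 : ℂ) + 0)) :=
      (hq0.add tendsto_const_nhds).add hker
    rw [zero_add, add_zero] at hsum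
    apply hsum.congr'
    filter_upwards [hZne] with b hb
    rw [hφC (Z b) (by rw [hre]; exact ha), integral_div]
    field_simp
    try ring
  have habs2 : Tendsto (fun b => ‖φC (Z b) / Z b‖) (cocompact ℝ)
      (nhds ‖(𝔟 : ℂ)‖) := (continuous_norm.tendsto _).comp hmain
  have : ‖(𝔟 : ℂ)‖ = 𝔟 := by
    rw [Complex.norm_of_nonneg h𝔟]
  rw [this] at habs2
  simp only [norm_div] at habs2
  exact habs2
end
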